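/- arXiv:2509.12576 — 5 statements merged into one kernel-verified Lean document; each statement's English description precedes it below -/
import Mathlib

section
/- Let R be a one-dimensional Noetherian local Cohen–Macaulay ring and I an ideal of R containing a regular element x. Then the colon ideal (xR :_R I) is a reflexive R-module (equivalently, a reflexive ideal). -/
open IsLocalRing

noncomputable def traceIdeal (R : Type*) [CommRing R] (M : Type*) [AddCommGroup M]
    [Module R M] : Ideal R :=
  ⨆ f : M →ₗ[R] R, LinearMap.range f

def IsCohenMacaulayLocalRing (R : Type*) [CommRing R] [IsLocalRing R] : Prop :=
  ∃ rs : List R, (∀ r ∈ rs, r ∈ maximalIdeal R) ∧ RingTheory.Sequence.IsRegular R rs ∧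
    ringKrullDim R = rs.length

noncomputable def moduleLength (R M : Type*) [CommRing R] [AddCommGroup M] [Module R M] :
    WithBot ℕ∞ :=
  Order.krullDim (Submodule R M)

noncomputable def conductorIdeal (R : Type*) [CommRing R] : Ideal R :=
  Submodule.colon (1 : Submodule R (FractionRing R))
    (Subalgebra.toSubmodule (integralClosure R (FractionRing R)))

def idealIntegralClosure {R : Type*} [CommRing R] (I : Ideal R) : Set R :=
  {x | ∃ n : ℕ, 0 < n ∧ ∃ a : ℕ → R, (∀ i ∈ Finset.Icc 1 n, a i ∈ I ^ i) ∧
    x ^ n + ∑ i ∈ Finset.Icc 1 n, a i * x ^ (n - i) = 0}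

def HasMinimalMultiplicity (R : Type*) [CommRing R] [IsLocalRing R] : Prop :=
  ∃ x : R, (x ∈ maximalIdeal R ∧
      ∃ n : ℕ, maximalIdeal R ^ (n + 1) = Ideal.span {x} * maximalIdeal R ^ n) ∧
    maximalIdeal R ^ 2 = Ideal.span {x} * maximalIdeal R

/-!
Write `J = (xR :_R I)` and `ι : J → R` for the inclusion. Evaluation at `ι` shows that
`J → J**` is injective. Given `Φ ∈ J**`, put `s = Φ ι`. For `i ∈ I`, multiplication by `i / x`
is a functional `fᵢ` on `J` with `x • fᵢ = i • ι`, so `i s = x Φ(fᵢ) ∈ xR`, i.e. `s ∈ J`.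
Every `f ∈ J*` satisfies `f(x) • ι = x • f`, hence `x f(s) = s f(x) = Φ(f(x) • ι) = x Φ(f)`,
and cancelling the regular element `x` shows that `Φ` is evaluation at `s`.
-/

open Module
open scoped nonZeroDivisors

section

variable {R : Type*} [CommRing R]

lemma LinearMap.exists_smul_eq_of_forall_dvd {M : Type*} [AddCommGroup M] [Module R M]
    {x : R} (hx : x ∈ R⁰) (g : M →ₗ[R] R) (hg : ∀ m, x ∣ g m) :
    ∃ f : M →ₗ[R] R, x • f = g := by
  have hinj : Function.Injective (LinearMap.mulLeft R x) :=
    (isRegular_iff_mem_nonZeroDivisors.mpr hx).left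
  refine ⟨codRestrictOfInjective g _ hinj fun m => ?_, ?_⟩
  · obtain ⟨r, hr⟩ := hg m
    exact ⟨r, hr.symm⟩
  · ext m
    exact codRestrictOfInjective_comp_apply g _ hinj _ m

namespace Ideal

lemma mem_span_singleton_colon {x j : R} {I : Ideal R} :
    j ∈ (span {x}).colon I ↔ ∀ i ∈ I, x ∣ j * i := by
  simp only [Submodule.mem_colon, SetLike.mem_coe, smul_eq_mul, mem_span_singleton]

lemma mul_dual_apply_comm {J : Ideal R} (f : Dual R J) (a b : J) :
    (a : R) * f b = b * f a := by
  rw [← smul_eq_mul, ← map_smul, ← smul_eq_mul (b : R), ← map_smul]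
  exact congrArg f (Subtype.ext (mul_comm _ _))

lemma dual_apply_smul_subtype {J : Ideal R} (f : Dual R J) (a : J) :
    f a • J.subtype = (a : R) • f := by
  ext b
  exact (mul_comm _ _).trans (mul_dual_apply_comm f b a)

lemma injective_dual_eval (J : Ideal R) : Function.Injective (Dual.eval R J) :=
  fun _ _ h => Subtype.ext (LinearMap.congr_fun h J.subtype)

lemma dual_eval_eq_of_apply_subtype_mem {J : Ideal R} {x : R} (hx : x ∈ R⁰) (hxJ : x ∈ J)
    (Φ : Dual R (Dual R J)) (hΦ : Φ J.subtype ∈ J) : Dual.eval R J ⟨_, hΦ⟩ = Φ := by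
  ext f
  refine (isRegular_iff_mem_nonZeroDivisors.mpr hx).left ?_
  calc x * f ⟨_, hΦ⟩ = Φ J.subtype * f ⟨x, hxJ⟩ := mul_dual_apply_comm f ⟨x, hxJ⟩ ⟨_, hΦ⟩
    _ = Φ (f ⟨x, hxJ⟩ • J.subtype) := by rw [map_smul, smul_eq_mul, mul_comm]
    _ = x * Φ f := by rw [dual_apply_smul_subtype, map_smul, smul_eq_mul]

lemma isReflexive_of_apply_subtype_mem {J : Ideal R} {x : R} (hx : x ∈ R⁰) (hxJ : x ∈ J)
    (h : ∀ Φ : Dual R (Dual R J), Φ J.subtype ∈ J) : IsReflexive R J :=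
  ⟨J.injective_dual_eval, fun Φ => ⟨_, dual_eval_eq_of_apply_subtype_mem hx hxJ Φ (h Φ)⟩⟩

lemma apply_subtype_mem_span_singleton_colon {x : R} (hx : x ∈ R⁰) (I : Ideal R)
    (Φ : Dual R (Dual R ((span {x}).colon I))) :
    Φ ((span {x}).colon I).subtype ∈ (span {x}).colon I := by
  refine mem_span_singleton_colon.mpr fun i hi => ?_
  obtain ⟨f, hf⟩ := LinearMap.exists_smul_eq_of_forall_dvd hx (i • ((span {x}).colon I).subtype)
    fun j => by simpa [mul_comm] using mem_span_singleton_colon.mp j.2 i hi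
  refine ⟨Φ f, ?_⟩
  rw [mul_comm, ← smul_eq_mul, ← map_smul, ← hf, map_smul, smul_eq_mul]

end Ideal

end

theorem colon_isReflexive_general
    (R : Type*) [CommRing R]
    (I : Ideal R) (x : R) (hx : x ∈ nonZeroDivisors R) :
    Module.IsReflexive R ↥((Ideal.span {x}).colon I) :=
  Ideal.isReflexive_of_apply_subtype_mem hx (Ideal.le_colon (Ideal.mem_span_singleton_self x))
    (Ideal.apply_subtype_mem_span_singleton_colon hx I)

/-- Let `R` be a one-dimensional Noetherian local Cohen–Macaulay ring and `I`
an ideal of `R` containing a regular element `x`. Then the colon ideal `(xR :_R I)` is a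
reflexive `R`-module. -/
theorem colon_isReflexive
    (R : Type*) [CommRing R] [IsNoetherianRing R] [IsLocalRing R]
    (hdim : ringKrullDim R = 1) (hCM : IsCohenMacaulayLocalRing R)
    (I : Ideal R) (x : R) (hxI : x ∈ I) (hx : x ∈ nonZeroDivisors R) :
    Module.IsReflexive R ↥((Ideal.span {x}).colon I) :=
  colon_isReflexive_general R I x hx
end

section
/- Let R be a commutative ring, S a ring extension of R contained in the total quotient ring Q of R (a birational extension). Then the conductor C_R(S) = R : S contains a regular element of R if and only if S is finitely generated as an R-module. -/
open IsLocalRing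

/-! The conductor contains a regular element exactly when `S` is a fractional ideal of `R`.
Multiplication by such an element is injective on `Q` and carries `S` into `R`, so `S` is
finitely generated because `R` is Noetherian; conversely, a common denominator of finitely
many generators of `S` lies in the conductor. -/

namespace FractionalIdeal

variable {R : Type*} [CommRing R] {S : Submonoid R} {P : Type*} [CommRing P] [Algebra R P]

theorem exists_mem_colon_one_iff_isFractional {I : Submodule R P} :
    (∃ a ∈ (1 : Submodule R P).colon I, a ∈ S) ↔ IsFractional S I := by
  simp only [Submodule.mem_colon, Submodule.mem_one]
  exact ⟨fun ⟨a, ha, haS⟩ => ⟨a, haS, ha⟩, fun ⟨a, haS, ha⟩ => ⟨a, ha, haS⟩⟩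

variable [IsLocalization S P]

theorem IsFractional.fg [IsNoetherianRing R] {I : Submodule R P} (hI : IsFractional S I) :
    I.FG := by
  obtain ⟨a, haS, ha⟩ := hI
  have hinj : Function.Injective (a • LinearMap.id : P →ₗ[R] P) := fun x y hxy => by
    rw [LinearMap.smul_apply, LinearMap.smul_apply, Algebra.smul_def, Algebra.smul_def] at hxy
    exact (IsLocalization.map_units P ⟨a, haS⟩).mul_left_cancel hxy
  have hle : I.map (a • LinearMap.id) ≤ 1 := by
    rintro _ ⟨b, hb, rfl⟩
    exact Submodule.mem_one.mpr (ha b hb)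
  have hone : (1 : Submodule R P).FG := by
    rw [Submodule.one_eq_span]
    exact Submodule.fg_span_singleton 1
  exact Submodule.fg_of_fg_map_injective _ hinj (hone.of_le hle)

theorem isFractional_iff_fg [IsNoetherianRing R] {I : Submodule R P} :
    IsFractional S I ↔ I.FG :=
  ⟨IsFractional.fg, isFractional_of_fg⟩

end FractionalIdeal

set_option synthInstance.maxHeartbeats 800000 in
/-- Let `R` be a commutative Noetherian ring and `S` a ring extension of `R`
contained in the total quotient ring `Q` of `R` (a birational extension). Then the conductor
`C_R(S) = R : S = {r ∈ R | rS ⊆ R}` contains a regular element of `R` if and only if `S` is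
finitely generated as an `R`-module. -/
theorem conductor_regular_iff_finite
    (R : Type*) [CommRing R] [IsNoetherianRing R]
    (S : Subalgebra R (FractionRing R)) :
    (∃ r ∈ Submodule.colon (1 : Submodule R (FractionRing R)) (Subalgebra.toSubmodule S),
        r ∈ nonZeroDivisors R) ↔ Module.Finite R ↥S := by
  rw [FractionalIdeal.exists_mem_colon_one_iff_isFractional, FractionalIdeal.isFractional_iff_fg]
  exact Module.Finite.iff_fg.symm
end

section
/- Let (R,m,k) be a one-dimensional non-regular Cohen–Macaulay local ring with infinite residue field. Then R has minimal multiplicity if and only if there exists a minimal reduction x of m with (xR :_R m) = m. -/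
open IsLocalRing

/-!
A minimal reduction `x` of `m` cannot lie in `m²`: otherwise `m^(n+1) = x m^n ⊆ m · m^(n+1)`,
so `m` is nilpotent by Nakayama and `R` has dimension zero. Now `m ⊆ (x) : m` says `m² ⊆ (x)`,
while `(x) : m ⊆ m` says `m ⊄ (x)`, i.e. `m ≠ (x)`. Finally, if `m² ⊆ (x)` and `x ∉ m²`, every
`c x ∈ m²` has `c ∈ m`, so `m² = x m`.
-/

namespace Ideal

variable {R : Type*} [CommRing R]

theorem le_colon_iff_mul_le {I J K : Ideal R} : J ≤ I.colon (K : Set R) ↔ J * K ≤ I := by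
  rw [Ideal.mul_le]
  simp only [SetLike.le_def, Submodule.mem_colon, SetLike.mem_coe, smul_eq_mul]

theorem colon_le_maximalIdeal_iff [IsLocalRing R] {I : Ideal R} {S : Set R} :
    I.colon S ≤ maximalIdeal R ↔ ¬ S ⊆ I := by
  rw [← Submodule.colon_eq_top_iff_subset]
  exact ⟨fun h htop => (maximalIdeal.isMaximal R).ne_top (top_le_iff.mp (htop ▸ h)),
    le_maximalIdeal⟩

theorem colon_maximalIdeal_eq_maximalIdeal_iff [IsLocalRing R] {I : Ideal R}
    (hI : ¬ maximalIdeal R ≤ I) :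
    I.colon (maximalIdeal R : Set R) = maximalIdeal R ↔ maximalIdeal R ^ 2 ≤ I := by
  rw [le_antisymm_iff, colon_le_maximalIdeal_iff, le_colon_iff_mul_le, pow_two]
  exact and_iff_right hI

theorem le_span_singleton_mul_maximalIdeal [IsLocalRing R] {J : Ideal R} {x : R}
    (hJ : J ≤ span {x}) (hx : x ∉ J) : J ≤ span {x} * maximalIdeal R := by
  intro t ht
  obtain ⟨c, rfl⟩ := mem_span_singleton'.mp (hJ ht)
  have hc : c ∈ maximalIdeal R := (mem_maximalIdeal c).mpr fun hunit =>
    hx (by simpa [← mul_assoc] using J.mul_mem_left ((hunit.unit⁻¹ : Rˣ) : R) ht)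
  simpa only [mul_comm c x] using mul_mem_mul (mem_span_singleton_self x) hc

end Ideal

namespace IsLocalRing

variable {R : Type*} [CommRing R] [IsLocalRing R]

theorem ringKrullDim_eq_zero_of_pow_eq_bot {n : ℕ} (h : maximalIdeal R ^ n = ⊥) :
    ringKrullDim R = 0 := by
  refine ringKrullDimZero_iff_ringKrullDim_eq_zero.mp (.mk₀ fun p hp => ?_)
  have hmp : maximalIdeal R ≤ p := hp.le_of_pow_le (h ▸ bot_le)
  exact (maximalIdeal.isMaximal R).eq_of_le hp.ne_top hmp ▸ maximalIdeal.isMaximal R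

variable [IsNoetherianRing R]

theorem pow_succ_eq_bot_of_mem_sq {I : Ideal R} (hI : I ≤ maximalIdeal R) {x : R} {n : ℕ}
    (hx : x ∈ I ^ 2) (hred : I ^ (n + 1) = Ideal.span {x} * I ^ n) : I ^ (n + 1) = ⊥ := by
  have hle : I ^ (n + 1) ≤ I • I ^ (n + 1) :=
    calc I ^ (n + 1) = Ideal.span {x} * I ^ n := hred
      _ ≤ I ^ 2 * I ^ n := Ideal.mul_mono_left ((Ideal.span_singleton_le_iff_mem _).mpr hx)
      _ = I * I ^ (n + 1) := by ring
  refine Submodule.eq_bot_of_le_smul_of_le_jacobson_bot I _ (IsNoetherian.noetherian _) hle ?_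
  exact (jacobson_eq_maximalIdeal (⊥ : Ideal R) bot_ne_top).symm ▸ hI

theorem notMem_sq_of_pow_succ_eq_span_singleton_mul (hdim : ringKrullDim R ≠ 0) {x : R}
    {n : ℕ} (hred : maximalIdeal R ^ (n + 1) = Ideal.span {x} * maximalIdeal R ^ n) :
    x ∉ maximalIdeal R ^ 2 := fun hx =>
  hdim (ringKrullDim_eq_zero_of_pow_eq_bot (pow_succ_eq_bot_of_mem_sq le_rfl hx hred))

end IsLocalRing

theorem minimalMultiplicity_iff_colon_eq_maximalIdeal_general
    (R : Type*) [CommRing R] [IsNoetherianRing R] [IsLocalRing R]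
    (hdim : ringKrullDim R = 1)
    (hnonreg : ¬ (maximalIdeal R).IsPrincipal) :
    HasMinimalMultiplicity R ↔
      ∃ x : R, (x ∈ maximalIdeal R ∧
          ∃ n : ℕ, maximalIdeal R ^ (n + 1) = Ideal.span {x} * maximalIdeal R ^ n) ∧
        (Ideal.span {x}).colon (maximalIdeal R) = maximalIdeal R := by
  refine exists_congr fun x => and_congr_right fun ⟨hx, n, hred⟩ => ?_
  have hx2 : x ∉ maximalIdeal R ^ 2 :=
    notMem_sq_of_pow_succ_eq_span_singleton_mul (by simp [hdim]) hred
  have hxm : Ideal.span {x} ≤ maximalIdeal R := (Ideal.span_singleton_le_iff_mem _).mpr hx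
  have hm : ¬ maximalIdeal R ≤ Ideal.span {x} := fun h => hnonreg ⟨x, h.antisymm hxm⟩
  rw [Ideal.colon_maximalIdeal_eq_maximalIdeal_iff hm]
  refine ⟨fun h => h ▸ Ideal.mul_le_left, fun h => ?_⟩
  refine (Ideal.le_span_singleton_mul_maximalIdeal h hx2).antisymm ?_
  exact pow_two (maximalIdeal R) ▸ Ideal.mul_mono_left hxm

/-- Let `(R, m, k)` be a one-dimensional non-regular Cohen–Macaulay local ring
with infinite residue field. Then `R` has minimal multiplicity (Sally: `m² = xm` for some
minimal reduction `x` of `m`) if and only if there is a minimal reduction `x` of `m` with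
`(xR :_R m) = m`. -/
theorem minimalMultiplicity_iff_colon_eq_maximalIdeal
    (R : Type*) [CommRing R] [IsNoetherianRing R] [IsLocalRing R]
    (hdim : ringKrullDim R = 1) (hCM : IsCohenMacaulayLocalRing R)
    (hnonreg : ¬ (maximalIdeal R).IsPrincipal) (hk : Infinite (ResidueField R)) :
    HasMinimalMultiplicity R ↔
      ∃ x : R, (x ∈ maximalIdeal R ∧
          ∃ n : ℕ, maximalIdeal R ^ (n + 1) = Ideal.span {x} * maximalIdeal R ^ n) ∧
        (Ideal.span {x}).colon (maximalIdeal R) = maximalIdeal R :=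
  minimalMultiplicity_iff_colon_eq_maximalIdeal_general R hdim hnonreg
end

section
/- Let R be an analytically unramified one-dimensional non-regular Cohen–Macaulay local ring with infinite residue field, having minimal multiplicity. If I is a proper regular trace ideal with integral closure \bar{I} = m, then I = m; in particular I is reflexive. -/
open IsLocalRing

/-!
Let `x` be a minimal reduction of `m`, so `m² = x m`. If `I` is a trace ideal and
`c I ⊆ x R`, then `t ↦ c t / x` is a functional on `I`, so its values lie in `tr I = I`:
hence `m I ⊆ x I`, and by induction `I^(i+1) ⊆ x^i I`. An equation of integral dependence
of `x ∈ m = Ī` over `I` then reads `x^n ∈ x^(n-1) I`, so `x ∈ I`, and `x m ⊆ m I ⊆ x I`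
gives `m ⊆ I`.

For reflexivity, `m² ⊆ x R` makes every functional `f` on `m` satisfy `x f = f(x) · id`, so a
functional `φ` on `m^*` is determined by `d = φ(id)`: `x φ(f) = f(x) d`. If `d` were a unit, the
same identity applied to `t ↦ t s / x` would put every `t ∈ m` in `x R`, making `m` principal;
so `d ∈ m`, and `φ` is evaluation at `d`.
-/

open scoped nonZeroDivisors

lemma LinearMap.apply_mem_traceIdeal {R M : Type*} [CommRing R] [AddCommGroup M] [Module R M]
    (f : M →ₗ[R] R) (t : M) : f t ∈ traceIdeal R M :=
  le_iSup (fun g : M →ₗ[R] R => LinearMap.range g) f (LinearMap.mem_range_self f t)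

namespace Ideal

variable {R : Type*} [CommRing R]

lemma pow_succ_le_pow_mul_of_mul_le {I J : Ideal R} (h : I * I ≤ J * I) (n : ℕ) :
    I ^ (n + 1) ≤ J ^ n * I := by
  induction n with
  | zero => simp
  | succ n ih =>
    calc I ^ (n + 2) = I ^ (n + 1) * I := pow_succ I (n + 1)
      _ ≤ J ^ n * I * I := mul_mono_left ih
      _ ≤ J ^ n * (J * I) := by rw [mul_assoc]; exact mul_mono_right h
      _ = J ^ (n + 1) * I := by rw [← mul_assoc, ← pow_succ]

lemma le_of_span_singleton_mul_le {x : R} (hx : x ∈ R⁰) {I J : Ideal R}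
    (h : span {x} * J ≤ span {x} * I) : J ≤ I := by
  intro t ht
  obtain ⟨u, hu, hxu⟩ := span_singleton_mul_le_span_singleton_mul.mp h t ht
  rwa [(mul_cancel_left_mem_nonZeroDivisors hx).mp hxu]

lemma exists_linearMap_mul_eq_of_mul_mem_span {x : R} (hx : x ∈ R⁰) {N : Ideal R} {c : R}
    (hc : ∀ t ∈ N, c * t ∈ span {x}) : ∃ f : N →ₗ[R] R, ∀ t : N, x * f t = c * t := by
  have hinj : Function.Injective (LinearMap.mulLeft R x) :=
    fun _ _ h => (mul_cancel_left_mem_nonZeroDivisors hx).mp h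
  let g : N →ₗ[R] LinearMap.range (LinearMap.mulLeft R x) :=
    (c • N.subtype).codRestrict _ fun t => by
      obtain ⟨a, ha⟩ := mem_span_singleton'.mp (hc t t.2)
      exact ⟨a, by simpa [mul_comm] using ha⟩
  exact ⟨(LinearEquiv.ofInjective _ hinj).symm.toLinearMap ∘ₗ g,
    fun t => LinearEquiv.ofInjective_symm_apply (f := LinearMap.mulLeft R x) (h := hinj) (g t)⟩

lemma mul_le_span_singleton_mul_of_traceIdeal_eq {I : Ideal R} (htr : traceIdeal R I = I)
    {x : R} (hx : x ∈ R⁰) {J : Ideal R} (hJ : J * I ≤ span {x}) :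
    J * I ≤ span {x} * I := by
  refine mul_le.mpr fun c hc u hu => ?_
  obtain ⟨f, hf⟩ :=
    exists_linearMap_mul_eq_of_mul_mem_span hx fun t ht => hJ (mul_mem_mul hc ht)
  rw [← hf ⟨u, hu⟩]
  exact mul_mem_mul (mem_span_singleton_self x) (htr.le (f.apply_mem_traceIdeal ⟨u, hu⟩))

lemma mem_of_mem_idealIntegralClosure {I : Ideal R} {x : R} (hx : x ∈ R⁰)
    (hI : I * I ≤ span {x} * I) (hxI : x ∈ idealIntegralClosure I) : x ∈ I := by
  obtain ⟨n, hn, a, ha, heq⟩ := hxI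
  have hsum : ∑ i ∈ Finset.Icc 1 n, a i * x ^ (n - i) ∈ span {x ^ (n - 1)} * I := by
    rw [← span_singleton_pow]
    refine _root_.sum_mem fun i hi => ?_
    obtain ⟨hi1, hin⟩ := Finset.mem_Icc.mp hi
    obtain ⟨j, rfl⟩ := Nat.exists_eq_add_of_le' hi1
    have hj : n - 1 = j + (n - (j + 1)) := by omega
    rw [hj, pow_add, mul_right_comm]
    exact mul_mem_mul (pow_succ_le_pow_mul_of_mul_le hI j (ha _ hi))
      (pow_mem_pow (mem_span_singleton_self x) _)
  obtain ⟨b, hb, hxb⟩ := mem_span_singleton_mul.mp hsum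
  have hxn : x ^ n = x ^ (n - 1) * x := by rw [← pow_succ, Nat.sub_add_cancel hn]
  have : x ^ (n - 1) * x = x ^ (n - 1) * -b := by
    rw [mul_neg, hxb, ← hxn]; exact eq_neg_of_add_eq_zero_left heq
  rw [(mul_cancel_left_mem_nonZeroDivisors (pow_mem hx _)).mp this]
  exact I.neg_mem hb

end Ideal

lemma LinearMap.mul_apply_comm {R : Type*} [CommRing R] {N : Ideal R} (f : N →ₗ[R] R)
    (s t : N) : s * f t = t * f s := by
  rw [← smul_eq_mul, ← map_smul, ← smul_eq_mul (t : R), ← map_smul]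
  exact congrArg f (Subtype.ext (mul_comm _ _))

namespace Module.Dual

variable {R : Type*} [CommRing R] {N : Ideal R}

lemma injective_eval_ideal : Function.Injective (eval R N) := fun _ _ h =>
  Subtype.ext (LinearMap.congr_fun h N.subtype)

lemma mul_apply_eq_mul_apply_subtype (φ : Dual R (Dual R N)) {f : Dual R N} {x c : R}
    (hf : ∀ t : N, x * f t = c * t) : x * φ f = c * φ N.subtype := by
  have : x • f = c • N.subtype := LinearMap.ext fun t => hf t
  rw [← smul_eq_mul, ← map_smul, this, map_smul, smul_eq_mul]

end Module.Dual

section MaximalIdeal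

variable {R : Type*} [CommRing R] [IsLocalRing R] {x : R}

lemma dual_dual_apply_subtype_mem_maximalIdeal (hx : x ∈ R⁰) (hxm : x ∈ maximalIdeal R)
    (hsq : maximalIdeal R * maximalIdeal R ≤ Ideal.span {x})
    (hnp : ¬ (maximalIdeal R).IsPrincipal) (φ : Module.Dual R (Module.Dual R (maximalIdeal R))) :
    φ (maximalIdeal R).subtype ∈ maximalIdeal R := by
  by_contra hd
  have hdu : IsUnit (φ (maximalIdeal R).subtype) := of_not_not hd
  refine hnp ⟨⟨x, le_antisymm (fun t ht => ?_) ?_⟩⟩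
  · obtain ⟨f, hf⟩ := Ideal.exists_linearMap_mul_eq_of_mul_mem_span hx
      fun s hs => hsq (Ideal.mul_mem_mul ht hs)
    exact (Ideal.mul_unit_mem_iff_mem _ hdu).mp
      (Ideal.mem_span_singleton.mpr ⟨_, (φ.mul_apply_eq_mul_apply_subtype hf).symm⟩)
  · exact (Ideal.span_singleton_le_iff_mem _).mpr hxm

theorem isReflexive_maximalIdeal_of_mul_le_span (hx : x ∈ R⁰) (hxm : x ∈ maximalIdeal R)
    (hsq : maximalIdeal R * maximalIdeal R ≤ Ideal.span {x})
    (hnp : ¬ (maximalIdeal R).IsPrincipal) : Module.IsReflexive R (maximalIdeal R) := by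
  refine ⟨⟨Module.Dual.injective_eval_ideal, fun φ => ?_⟩⟩
  have hd := dual_dual_apply_subtype_mem_maximalIdeal hx hxm hsq hnp φ
  refine ⟨⟨_, hd⟩, LinearMap.ext fun f => ?_⟩
  have hf : ∀ t : maximalIdeal R, x * f t = f ⟨x, hxm⟩ * t := fun t => by
    rw [mul_comm (f _)]; exact f.mul_apply_comm ⟨x, hxm⟩ t
  refine (mul_cancel_left_mem_nonZeroDivisors hx).mp ?_
  rw [Module.Dual.eval_apply, hf, φ.mul_apply_eq_mul_apply_subtype hf]

end MaximalIdeal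

theorem trace_with_integralClosure_maximalIdeal_eq_general
    (R : Type*) [CommRing R] [IsLocalRing R]
    (hnonreg : ¬ (maximalIdeal R).IsPrincipal)
    (hmm : HasMinimalMultiplicity R)
    (I : Ideal R) (hproper : I ≠ ⊤) (hreg : ∃ x ∈ I, x ∈ nonZeroDivisors R)
    (htr : traceIdeal R ↥I = I)
    (hic : idealIntegralClosure I = ((maximalIdeal R : Ideal R) : Set R)) :
    I = maximalIdeal R ∧ Module.IsReflexive R ↥I := by
  obtain ⟨x, ⟨hxm, -⟩, hsq⟩ := hmm
  obtain ⟨y, hyI, hy⟩ := hreg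
  have hIm : I ≤ maximalIdeal R := le_maximalIdeal hproper
  have hmsq : maximalIdeal R * maximalIdeal R ≤ Ideal.span {x} :=
    (pow_two (maximalIdeal R) ▸ hsq.le).trans Ideal.mul_le_left
  have hx : x ∈ R⁰ := by
    obtain ⟨s, hs⟩ :=
      Ideal.mem_span_singleton'.mp (hmsq (Ideal.mul_mem_mul (hIm hyI) (hIm hyI)))
    exact (mul_mem_nonZeroDivisors.mp (hs ▸ mul_mem_nonZeroDivisors.mpr ⟨hy, hy⟩)).2
  have hmI : maximalIdeal R * I ≤ Ideal.span {x} * I :=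
    Ideal.mul_le_span_singleton_mul_of_traceIdeal_eq htr hx
      ((Ideal.mul_mono_right hIm).trans hmsq)
  have hxI : x ∈ I := Ideal.mem_of_mem_idealIntegralClosure hx
    ((Ideal.mul_mono_left hIm).trans hmI) (hic ▸ hxm)
  have hmle : maximalIdeal R ≤ I := Ideal.le_of_span_singleton_mul_le hx <|
    calc Ideal.span {x} * maximalIdeal R ≤ I * maximalIdeal R :=
          Ideal.mul_mono_left ((Ideal.span_singleton_le_iff_mem _).mpr hxI)
      _ = maximalIdeal R * I := mul_comm _ _
      _ ≤ Ideal.span {x} * I := hmI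
  obtain rfl : I = maximalIdeal R := le_antisymm hIm hmle
  exact ⟨rfl, isReflexive_maximalIdeal_of_mul_le_span hx hxm hmsq hnonreg⟩

/-- Let `R` be an analytically unramified one-dimensional non-regular
Cohen–Macaulay local ring with infinite residue field, having minimal multiplicity. If `I` is
a proper regular trace ideal with integral closure `Ī = m`, then `I = m`; in particular `I`
is reflexive. -/
theorem trace_with_integralClosure_maximalIdeal_eq
    (R : Type*) [CommRing R] [IsNoetherianRing R] [IsLocalRing R]
    (hur : IsReduced (AdicCompletion (maximalIdeal R) R))
    (hdim : ringKrullDim R = 1) (hCM : IsCohenMacaulayLocalRing R)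
    (hnonreg : ¬ (maximalIdeal R).IsPrincipal) (hk : Infinite (ResidueField R))
    (hmm : HasMinimalMultiplicity R)
    (I : Ideal R) (hproper : I ≠ ⊤) (hreg : ∃ x ∈ I, x ∈ nonZeroDivisors R)
    (htr : traceIdeal R ↥I = I)
    (hic : idealIntegralClosure I = ((maximalIdeal R : Ideal R) : Set R)) :
    I = maximalIdeal R ∧ Module.IsReflexive R ↥I :=
  trace_with_integralClosure_maximalIdeal_eq_general R hnonreg hmm I hproper hreg htr hic
end

section
/- In R = k[[t^7, t^8, t^9, t^{11}]], the ideal I = (t^8, t^9, t^{21}) is reflexive; indeed I equals the double dual (bidual) of the ideal J = (t^8, t^9), i.e., I = R : (R : J). -/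
/-!
All modules involved are monomial: membership is decided by the support alone, which must lie in
a fixed set of exponents. Sums of monomial modules are monomial with the union of the exponent
sets, and if `R` and `M` have exponent sets `S` and `T`, then `R : M` (Mathlib's `1 / M`) has
exponent set `{m | m + T ⊆ S}`. So the biduals are computed on exponent sets: `J` and `I` both
have dual exponent set `{-1, 0} ∪ [6, ∞)`, whose dual is `{8, 9} ∪ [15, ∞)`, the exponent set of
`I`.
-/

open HahnSeries

/-- The numerical semigroup generated by `7, 8, 9, 11`. -/
def valSG : AddSubmonoid ℕ := AddSubmonoid.closure {7, 8, 9, 11}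

theorem algebraMap_laurentSeries_eq_single {k : Type*} [Field k] (c : k) :
    (algebraMap k (LaurentSeries k)) c = HahnSeries.single 0 c := by
  rw [HahnSeries.algebraMap_apply']
  rw [show algebraMap k (PowerSeries k) c = PowerSeries.C c from rfl]
  rw [HahnSeries.ofPowerSeries_C, HahnSeries.C_apply]

/-- The numerical semigroup ring `R = k[[t⁷, t⁸, t⁹, t¹¹]]`, realized as the subalgebra of
the Laurent series field `k((t))` consisting of (power) series supported on the numerical
semigroup `⟨7, 8, 9, 11⟩`. -/
def NSR (k : Type*) [Field k] : Subalgebra k (LaurentSeries k) where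
  carrier := {x | ∀ n : ℤ, x.coeff n ≠ 0 → ∃ m ∈ valSG, (m : ℤ) = n}
  mul_mem' := by
    intro a b ha hb n hn
    rw [HahnSeries.coeff_mul] at hn
    obtain ⟨ij, hij, hne⟩ := Finset.exists_ne_zero_of_sum_ne_zero hn
    rw [Finset.mem_addAntidiagonal] at hij
    obtain ⟨m1, hm1, he1⟩ := ha ij.1 (fun h => hne (by rw [h, zero_mul]))
    obtain ⟨m2, hm2, he2⟩ := hb ij.2 (fun h => hne (by rw [h, mul_zero]))
    exact ⟨m1 + m2, add_mem hm1 hm2, by push_cast; rw [he1, he2]; exact hij.2.2⟩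
  one_mem' := by
    intro n hn
    rcases eq_or_ne n 0 with h | h
    · exact ⟨0, zero_mem _, by simp [h]⟩
    · exact absurd (by simpa using HahnSeries.coeff_single_of_ne (r := (1 : k)) h) hn
  add_mem' := by
    intro a b ha hb n hn
    rw [HahnSeries.coeff_add] at hn
    by_cases h : a.coeff n = 0
    · exact hb n (by intro hb0; exact hn (by rw [h, hb0, add_zero]))
    · exact ha n h
  zero_mem' := by intro n hn; simp at hn
  algebraMap_mem' := by
    intro c n hn
    rcases eq_or_ne n 0 with h | h
    · exact ⟨0, zero_mem _, by simp [h]⟩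
    · rw [algebraMap_laurentSeries_eq_single] at hn
      exact absurd (HahnSeries.coeff_single_of_ne h) hn

theorem single_mem_NSR {k : Type*} [Field k] {n : ℕ} (hn : n ∈ valSG) :
    (HahnSeries.single (n : ℤ) (1 : k) : LaurentSeries k) ∈ NSR k := by
  intro m hm
  rcases eq_or_ne m (n : ℤ) with h | h
  · exact ⟨n, hn, h.symm⟩
  · exact absurd (HahnSeries.coeff_single_of_ne h) hm

theorem mem_valSG_7 : (7 : ℕ) ∈ valSG := AddSubmonoid.subset_closure (by simp)
theorem mem_valSG_8 : (8 : ℕ) ∈ valSG := AddSubmonoid.subset_closure (by simp)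
theorem mem_valSG_9 : (9 : ℕ) ∈ valSG := AddSubmonoid.subset_closure (by simp)
theorem mem_valSG_11 : (11 : ℕ) ∈ valSG := AddSubmonoid.subset_closure (by simp)
theorem mem_valSG_21 : (21 : ℕ) ∈ valSG := by
  have := add_mem (add_mem mem_valSG_7 mem_valSG_7) mem_valSG_7
  norm_num at this ⊢; exact this

theorem tpow_mem {k : Type*} [Field k] {n : ℕ} (hn : n ∈ valSG) :
    (HahnSeries.single (1 : ℤ) (1 : k)) ^ n ∈ NSR k := by
  rw [HahnSeries.single_pow]
  simpa using single_mem_NSR hn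

/-- `t`, the uniformizer of `k[[t]] ⊆ k((t))`. -/
noncomputable def tE (k : Type*) [Field k] : LaurentSeries k := HahnSeries.single 1 1

theorem tE_pow_mem {k : Type*} [Field k] {n : ℕ} (hn : n ∈ valSG) : tE k ^ n ∈ NSR k :=
  tpow_mem hn

namespace HahnSeries

variable {Γ R : Type*} [PartialOrder Γ] [Zero R]

noncomputable def restrict (x : HahnSeries Γ R) (T : Set Γ) : HahnSeries Γ R where
  coeff := T.indicator x.coeff
  isPWO_support' := x.isPWO_support.mono <| by
    rw [Set.support_indicator]
    exact Set.inter_subset_right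

@[simp]
theorem coeff_restrict (x : HahnSeries Γ R) (T : Set Γ) :
    (x.restrict T).coeff = T.indicator x.coeff := rfl

theorem support_restrict (x : HahnSeries Γ R) (T : Set Γ) :
    (x.restrict T).support = T ∩ x.support :=
  Set.support_indicator

end HahnSeries

theorem LaurentSeries.support_mul_single_one {k : Type*} [Field k] (x : LaurentSeries k) (a : ℤ) :
    (x * single a 1).support = {n | n - a ∈ x.support} := by
  ext n
  simp [HahnSeries.mem_support, coeff_mul_single]

section Monomial

variable {k : Type*} [Field k] {A : Subalgebra k (LaurentSeries k)}

def IsMonomial (M : Submodule A (LaurentSeries k)) (T : Set ℤ) : Prop :=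
  ∀ x : LaurentSeries k, x ∈ M ↔ x.support ⊆ T

def dualExponents (S T : Set ℤ) : Set ℤ := {m | ∀ n ∈ T, m + n ∈ S}

variable {S T T₁ T₂ : Set ℤ} {M N : Submodule A (LaurentSeries k)}

theorem IsMonomial.eq (hM : IsMonomial M T) (hN : IsMonomial N T) : M = N :=
  Submodule.ext fun x => (hM x).trans (hN x).symm

theorem IsMonomial.single_mem (hM : IsMonomial M T) {n : ℤ} (hn : n ∈ T) :
    single n (1 : k) ∈ M :=
  (hM _).2 (support_single_subset.trans (Set.singleton_subset_iff.2 hn))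

theorem IsMonomial.sup (hM : IsMonomial M T₁) (hN : IsMonomial N T₂) :
    IsMonomial (M ⊔ N) (T₁ ∪ T₂) := by
  intro x
  rw [Submodule.mem_sup]
  constructor
  · rintro ⟨y, hy, z, hz, rfl⟩
    exact (support_add_subset y z).trans (Set.union_subset_union ((hM y).1 hy) ((hN z).1 hz))
  · intro hx
    refine ⟨x.restrict T₁, (hM _).2 ?_, x.restrict T₁ᶜ, (hN _).2 ?_, ?_⟩
    · rw [support_restrict]
      exact Set.inter_subset_left
    · rw [support_restrict]
      intro n ⟨hn₁, hn⟩
      exact (hx hn).resolve_left hn₁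
    · ext n
      simp only [coeff_add, coeff_restrict, Set.indicator_self_add_compl_apply]

variable (hA : ∀ x : LaurentSeries k, x ∈ A ↔ x.support ⊆ S)
include hA

theorem isMonomial_one : IsMonomial (1 : Submodule A (LaurentSeries k)) S := by
  intro x
  rw [Submodule.mem_one, ← hA]
  exact ⟨fun ⟨y, hy⟩ => hy ▸ y.2, fun hx => ⟨⟨x, hx⟩, rfl⟩⟩

theorem isMonomial_span_single (a : ℤ) :
    IsMonomial (A ∙ (single a 1 : LaurentSeries k)) {n | n - a ∈ S} := by
  intro x
  rw [Submodule.mem_span_singleton]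
  constructor
  · rintro ⟨r, rfl⟩
    rw [Subalgebra.smul_def, smul_eq_mul, LaurentSeries.support_mul_single_one]
    exact fun n hn => (hA r).1 r.2 hn
  · intro hx
    have hr : x * single (-a) 1 ∈ A := by
      rw [hA, LaurentSeries.support_mul_single_one]
      intro n hn
      simpa using hx hn
    refine ⟨⟨_, hr⟩, ?_⟩
    rw [Subalgebra.smul_def, smul_eq_mul, mul_assoc, single_mul_single, neg_add_cancel, mul_one,
      single_zero_one, mul_one]

theorem IsMonomial.one_div (hM : IsMonomial M T) :
    IsMonomial (1 / M) (dualExponents S T) := by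
  intro x
  rw [Submodule.mem_div_iff_forall_mul_mem]
  constructor
  · intro hx m hm n hn
    have hxn := ((isMonomial_one hA) _).1 (hx _ (hM.single_mem hn))
    apply hxn
    rw [HahnSeries.mem_support, coeff_mul_single_add, mul_one]
    exact hm
  · intro hx y hy
    rw [isMonomial_one hA]
    refine support_mul_subset.trans ?_
    rintro _ ⟨m, hm, n, hn, rfl⟩
    exact hx hm n ((hM y).1 hy hn)

end Monomial

theorem mem_valSG_of_le {n : ℕ} (hn : 14 ≤ n) : n ∈ valSG := by
  induction n using Nat.strong_induction_on with
  | _ n ih =>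
    by_cases hn' : n < 21
    · interval_cases n
      exacts [add_mem mem_valSG_7 mem_valSG_7, add_mem mem_valSG_7 mem_valSG_8,
        add_mem mem_valSG_7 mem_valSG_9, add_mem mem_valSG_8 mem_valSG_9,
        add_mem mem_valSG_7 mem_valSG_11, add_mem mem_valSG_8 mem_valSG_11,
        add_mem mem_valSG_9 mem_valSG_11]
    · simpa [Nat.sub_add_cancel (by omega : 7 ≤ n)] using
        add_mem (ih (n - 7) (by omega) (by omega)) mem_valSG_7

theorem mem_valSG_iff {n : ℕ} : n ∈ valSG ↔ n = 0 ∨ n = 7 ∨ n = 8 ∨ n = 9 ∨ n = 11 ∨ 14 ≤ n := by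
  constructor
  · intro h
    induction h using AddSubmonoid.closure_induction with
    | mem x hx => simp only [Set.mem_insert_iff, Set.mem_singleton_iff] at hx; omega
    | zero => omega
    | add x y _ _ _ _ => omega
  · rintro (rfl | rfl | rfl | rfl | rfl | h)
    exacts [zero_mem _, mem_valSG_7, mem_valSG_8, mem_valSG_9, mem_valSG_11, mem_valSG_of_le h]

def nsrExponents : Set ℤ := {n | n = 0 ∨ n = 7 ∨ n = 8 ∨ n = 9 ∨ n = 11 ∨ 14 ≤ n}

theorem mem_NSR_iff_support_subset {k : Type*} [Field k] (x : LaurentSeries k) :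
    x ∈ NSR k ↔ x.support ⊆ nsrExponents := by
  refine forall_congr' fun n => imp_congr_right fun _ => ?_
  constructor
  · rintro ⟨m, hm, rfl⟩
    simp only [nsrExponents, Set.mem_ofPred_eq]
    rw [mem_valSG_iff] at hm
    omega
  · intro hn
    simp only [nsrExponents, Set.mem_ofPred_eq] at hn
    exact ⟨n.toNat, mem_valSG_iff.2 (by omega), by omega⟩

theorem tE_pow_eq_single (k : Type*) [Field k] (n : ℕ) : tE k ^ n = single (n : ℤ) (1 : k) := by
  rw [tE, single_pow, one_pow, nsmul_eq_mul, mul_one]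

theorem shifts_8_9_subset :
    {n | n - 8 ∈ nsrExponents} ∪ {n | n - 9 ∈ nsrExponents} ⊆ {n | n = 8 ∨ n = 9 ∨ 15 ≤ n} := by
  intro n
  simp only [nsrExponents, Set.mem_union, Set.mem_ofPred_eq]
  omega

theorem shifts_8_9_21_eq :
    {n | n - 8 ∈ nsrExponents} ∪ ({n | n - 9 ∈ nsrExponents} ∪ {n | n - 21 ∈ nsrExponents}) =
      {n | n = 8 ∨ n = 9 ∨ 15 ≤ n} := by
  ext n
  simp only [nsrExponents, Set.mem_union, Set.mem_ofPred_eq]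
  omega

theorem dualExponents_nsrExponents_of_subset {T : Set ℤ} (h8 : 8 ∈ T) (h9 : 9 ∈ T)
    (hT : T ⊆ {n | n = 8 ∨ n = 9 ∨ 15 ≤ n}) :
    dualExponents nsrExponents T = {m | m = -1 ∨ m = 0 ∨ 6 ≤ m} := by
  ext m
  simp only [dualExponents, nsrExponents, Set.mem_ofPred_eq]
  constructor
  · intro h
    have := h 8 h8
    have := h 9 h9
    omega
  · intro hm n hn
    have := hT hn
    simp only [Set.mem_ofPred_eq] at this
    omega

theorem dualExponents_nsrExponents_neg_one_zero_Ici_six :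
    dualExponents nsrExponents {n | n = -1 ∨ n = 0 ∨ 6 ≤ n} = {m | m = 8 ∨ m = 9 ∨ 15 ≤ m} := by
  ext m
  simp only [dualExponents, nsrExponents, Set.mem_ofPred_eq]
  constructor
  · intro h
    have := h (-1) (by omega)
    have := h 0 (by omega)
    omega
  · intro hm n hn
    omega

theorem nsr_ideal_reflexive_eq_bidual_general
    (k : Type*) [Field k] :
    Submodule.span ↥(NSR k) ({tE k ^ 8, tE k ^ 9, tE k ^ 21} : Set (LaurentSeries k)) =
        1 / (1 / Submodule.span ↥(NSR k) ({tE k ^ 8, tE k ^ 9} : Set (LaurentSeries k))) ∧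
      Submodule.span ↥(NSR k) ({tE k ^ 8, tE k ^ 9, tE k ^ 21} : Set (LaurentSeries k)) =
        1 / (1 / Submodule.span ↥(NSR k)
          ({tE k ^ 8, tE k ^ 9, tE k ^ 21} : Set (LaurentSeries k))) := by
  have hR := mem_NSR_iff_support_subset (k := k)
  simp only [tE_pow_eq_single, Nat.cast_ofNat, Submodule.span_insert]
  have hJ := (isMonomial_span_single hR 8).sup (isMonomial_span_single hR 9)
  have hI := shifts_8_9_21_eq ▸ (isMonomial_span_single hR 8).sup
    ((isMonomial_span_single hR 9).sup (isMonomial_span_single hR 21))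
  have hJdual := dualExponents_nsrExponents_of_subset (by simp [nsrExponents])
    (by simp [nsrExponents]) shifts_8_9_subset ▸ hJ.one_div hR
  have hIdual := dualExponents_nsrExponents_of_subset (by simp) (by simp) le_rfl ▸ hI.one_div hR
  exact ⟨hI.eq (dualExponents_nsrExponents_neg_one_zero_Ici_six ▸ hJdual.one_div hR),
    hI.eq (dualExponents_nsrExponents_neg_one_zero_Ici_six ▸ hIdual.one_div hR)⟩

/-- In `R = k[[t⁷, t⁸, t⁹, t¹¹]]`, the ideal `I = (t⁸, t⁹, t²¹)` is
reflexive; indeed `I` equals the bidual `R : (R : J)` of the ideal `J = (t⁸, t⁹)`, where for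
an `R`-submodule `L` of `k((t))` the colon `R : L = {α | αL ⊆ R}` is `1 / L`. -/
theorem nsr_ideal_reflexive_eq_bidual
    (k : Type*) [Field k] [Infinite k] :
    Submodule.span ↥(NSR k) ({tE k ^ 8, tE k ^ 9, tE k ^ 21} : Set (LaurentSeries k)) =
        1 / (1 / Submodule.span ↥(NSR k) ({tE k ^ 8, tE k ^ 9} : Set (LaurentSeries k))) ∧
      Submodule.span ↥(NSR k) ({tE k ^ 8, tE k ^ 9, tE k ^ 21} : Set (LaurentSeries k)) =
        1 / (1 / Submodule.span ↥(NSR k)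
          ({tE k ^ 8, tE k ^ 9, tE k ^ 21} : Set (LaurentSeries k))) :=
  nsr_ideal_reflexive_eq_bidual_general k
end
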